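/- arXiv:cond-mat/0012270 — 2 statements merged into one kernel-verified Lean document; each statement's English description precedes it below -/
import Mathlib

section
/- Let M ≥ 1 be real, let j ≥ 0 be an integer, and let X ≥ 0, F ≥ 0 be reals satisfying M^{j−1} ≤ (1+X)^{3/4}·(1+F+X)^{1/4} ≤ M^{j} and F ≤ M^{j}. Then (1+X)·(1+F+X) ≥ 2^{−2/3}·M^{2j − 8/3}. Consequently, any function C satisfying |C| ≤ K₁/((1+X)(1+F+X)) on this region obeys |C| ≤ K₁·2^{2/3}·M^{8/3}·M^{−2j}. -/
/-- Power-counting bound for the sliced propagator with `k = 0`: on the region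
`M^(j-1) ≤ (1+X)^(3/4)(1+F+X)^(1/4) ≤ M^j`, `F ≤ M^j`, one has
`(1+X)(1+F+X) ≥ 2^(-2/3) M^(2j-8/3)`; consequently any `C` with
`|C| ≤ K₁/((1+X)(1+F+X))` obeys `|C| ≤ K₁ 2^(2/3) M^(8/3) M^(-2j)`. -/
theorem stmt8 (M : ℝ) (hM : 1 ≤ M) (j : ℕ)
    (X F : ℝ) (hX : 0 ≤ X) (hF : 0 ≤ F)
    (h1 : M ^ ((j : ℝ) - 1) ≤ (1 + X) ^ ((3 : ℝ) / 4) * (1 + F + X) ^ ((1 : ℝ) / 4))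
    (h2 : (1 + X) ^ ((3 : ℝ) / 4) * (1 + F + X) ^ ((1 : ℝ) / 4) ≤ M ^ (j : ℝ))
    (h3 : F ≤ M ^ (j : ℝ)) :
    (2 : ℝ) ^ (-(2 : ℝ) / 3) * M ^ (2 * (j : ℝ) - 8 / 3) ≤ (1 + X) * (1 + F + X) ∧
      ∀ K₁ C : ℝ, |C| ≤ K₁ / ((1 + X) * (1 + F + X)) →
        |C| ≤ K₁ * (2 : ℝ) ^ ((2 : ℝ) / 3) * M ^ ((8 : ℝ) / 3) * M ^ (-2 * (j : ℝ)) := by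
  have hM0 : (0:ℝ) < M := lt_of_lt_of_le zero_lt_one hM
  have hP0 : (0:ℝ) < 1 + X := by linarith
  have hQ0 : (0:ℝ) < 1 + F + X := by linarith
  have hPQ : (1:ℝ) + X ≤ 1 + F + X := by linarith
  set P := (1:ℝ) + X with hPdef
  set Q := (1:ℝ) + F + X with hQdef
  -- raise h1 to power 4
  have hA4 : M ^ (4 * (j:ℝ) - 4) ≤ P ^ (3:ℝ) * Q ^ (1:ℝ) := by
    have h := Real.rpow_le_rpow (Real.rpow_nonneg hM0.le _) h1 (by norm_num : (0:ℝ) ≤ 4)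
    rwa [← Real.rpow_mul hM0.le, Real.mul_rpow (Real.rpow_nonneg hP0.le _)
      (Real.rpow_nonneg hQ0.le _), ← Real.rpow_mul hP0.le, ← Real.rpow_mul hQ0.le,
      show ((j:ℝ) - 1) * 4 = 4 * (j:ℝ) - 4 by ring,
      show (3:ℝ)/4 * 4 = 3 by norm_num, show (1:ℝ)/4 * 4 = 1 by norm_num] at h
  have hA4' : P ^ (3:ℝ) * Q ^ (1:ℝ) ≤ M ^ (4 * (j:ℝ)) := by
    have h := Real.rpow_le_rpow (by positivity) h2 (by norm_num : (0:ℝ) ≤ 4)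
    rwa [← Real.rpow_mul hM0.le, Real.mul_rpow (Real.rpow_nonneg hP0.le _)
      (Real.rpow_nonneg hQ0.le _), ← Real.rpow_mul hP0.le, ← Real.rpow_mul hQ0.le,
      show (j:ℝ) * 4 = 4 * (j:ℝ) by ring,
      show (3:ℝ)/4 * 4 = 3 by norm_num, show (1:ℝ)/4 * 4 = 1 by norm_num] at h
  rw [Real.rpow_one] at hA4 hA4'
  -- P ≤ M^j
  have hPle : P ≤ M ^ (j:ℝ) := by
    have h4 : P ^ (4:ℝ) ≤ M ^ (4 * (j:ℝ)) := by
      calc P ^ (4:ℝ) = P ^ (3:ℝ) * P := by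
            rw [show (4:ℝ) = 3 + 1 by norm_num, Real.rpow_add hP0, Real.rpow_one]
        _ ≤ P ^ (3:ℝ) * Q := by
            have := Real.rpow_nonneg hP0.le (3:ℝ); nlinarith
        _ ≤ M ^ (4 * (j:ℝ)) := hA4'
    have h := Real.rpow_le_rpow (Real.rpow_nonneg hP0.le _) h4 (by norm_num : (0:ℝ) ≤ 1/4)
    rwa [← Real.rpow_mul hP0.le, ← Real.rpow_mul hM0.le,
      show (4:ℝ) * (1/4) = 1 by norm_num,
      show 4 * (j:ℝ) * (1/4) = (j:ℝ) by ring, Real.rpow_one] at h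
  have hQle : Q ≤ 2 * M ^ (j:ℝ) := by
    have : Q = P + F := by rw [hPdef, hQdef]; ring
    rw [this]; linarith
  -- P^3 ≥ M^(3j-4)/2
  have hMj0 : (0:ℝ) < M ^ (j:ℝ) := Real.rpow_pos_of_pos hM0 _
  have hP3 : M ^ (3 * (j:ℝ) - 4) / 2 ≤ P ^ (3:ℝ) := by
    have hP3nn : (0:ℝ) ≤ P ^ (3:ℝ) := Real.rpow_nonneg hP0.le _
    have hub : M ^ (4 * (j:ℝ) - 4) ≤ P ^ (3:ℝ) * (2 * M ^ (j:ℝ)) := by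
      calc M ^ (4 * (j:ℝ) - 4) ≤ P ^ (3:ℝ) * Q := hA4
        _ ≤ P ^ (3:ℝ) * (2 * M ^ (j:ℝ)) := by nlinarith
    have hsplit : M ^ (4 * (j:ℝ) - 4) = M ^ (3 * (j:ℝ) - 4) * M ^ (j:ℝ) := by
      rw [← Real.rpow_add hM0]; ring_nf
    rw [hsplit] at hub
    rw [div_le_iff₀ (by norm_num : (0:ℝ) < 2)]
    nlinarith
  -- main inequality via P^2
  have hP2 : (2:ℝ) ^ (-(2:ℝ)/3) * M ^ (2 * (j:ℝ) - 8/3) ≤ P ^ (2:ℝ) := by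
    have h := Real.rpow_le_rpow (by positivity) hP3 (by norm_num : (0:ℝ) ≤ 2/3)
    rw [← Real.rpow_mul hP0.le, show (3:ℝ) * (2/3) = 2 by norm_num,
      Real.div_rpow (Real.rpow_nonneg hM0.le _) (by norm_num : (0:ℝ) ≤ 2),
      ← Real.rpow_mul hM0.le, show (3 * (j:ℝ) - 4) * (2/3) = 2 * (j:ℝ) - 8/3 by ring] at h
    have h2 : (2:ℝ) ^ (-(2:ℝ)/3) = ((2:ℝ) ^ ((2:ℝ)/3))⁻¹ := by
      rw [show (-(2:ℝ)/3) = -((2:ℝ)/3) by ring, Real.rpow_neg (by norm_num : (0:ℝ) ≤ 2)]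
    rw [h2, mul_comm, ← div_eq_mul_inv]
    exact h
  have hmain : (2:ℝ) ^ (-(2:ℝ)/3) * M ^ (2 * (j:ℝ) - 8/3) ≤ P * Q := by
    have hPP : P ^ (2:ℝ) ≤ P * Q := by
      rw [show (2:ℝ) = 1 + 1 by norm_num, Real.rpow_add hP0, Real.rpow_one]
      nlinarith
    exact le_trans hP2 hPP
  refine ⟨hmain, ?_⟩
  intro K₁ C hC
  have hL0 : (0:ℝ) < (2:ℝ) ^ (-(2:ℝ)/3) * M ^ (2 * (j:ℝ) - 8/3) := by positivity
  have hPQ0 : (0:ℝ) < P * Q := mul_pos hP0 hQ0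
  have hK0 : 0 ≤ K₁ := by
    by_contra h
    push_neg at h
    have : K₁ / (P * Q) < 0 := div_neg_of_neg_of_pos h hPQ0
    have := abs_nonneg C
    linarith
  have hstep : |C| ≤ K₁ / ((2:ℝ) ^ (-(2:ℝ)/3) * M ^ (2 * (j:ℝ) - 8/3)) :=
    le_trans hC (div_le_div_of_nonneg_left hK0 hL0 hmain)
  have heq : K₁ / ((2:ℝ) ^ (-(2:ℝ)/3) * M ^ (2 * (j:ℝ) - 8/3))
      = K₁ * (2:ℝ) ^ ((2:ℝ)/3) * M ^ ((8:ℝ)/3) * M ^ (-2 * (j:ℝ)) := by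
    rw [div_eq_mul_inv, mul_inv, ← Real.rpow_neg (by norm_num : (0:ℝ) ≤ 2),
      ← Real.rpow_neg hM0.le, show -(-(2:ℝ)/3) = (2:ℝ)/3 by ring,
      show -(2 * (j:ℝ) - 8/3) = 8/3 + (-2 * (j:ℝ)) by ring, Real.rpow_add hM0]
    ring
  rwa [heq] at hstep
end

section
/- Let M ≥ 1 and α be reals with 0 ≤ α < 1/2, let j ≥ 0 and k ≥ 1 be integers, and let X ≥ 0, F ≥ 0 be reals satisfying M^{j−1} ≤ (1+X)^{1/2+α}·(1+F+X)^{1/2−α} ≤ M^{j} and M^{j+k−1} ≤ F ≤ M^{j+k}. Then M^{j}·M^{−k(1−2α)/(1+2α)}·M^{−2/(1+2α)}·2^{−(1−2α)/(1+2α)} ≤ 1 + X ≤ M^{j}·M^{−k(1−2α)/(1+2α)}·M^{(1−2α)/(1+2α)}. -/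
/-- Appendix A: spatial constraint for the generalized slice decomposition with
parameter `α ∈ [0, 1/2)`: if `M^(j-1) ≤ (1+X)^(1/2+α)(1+F+X)^(1/2-α) ≤ M^j`
and `M^(j+k-1) ≤ F ≤ M^(j+k)` with `k ≥ 1`, then
`M^j M^(-k(1-2α)/(1+2α)) M^(-2/(1+2α)) 2^(-(1-2α)/(1+2α)) ≤ 1+X
  ≤ M^j M^(-k(1-2α)/(1+2α)) M^((1-2α)/(1+2α))`. -/
theorem stmt10 (M α : ℝ) (hM : 1 ≤ M) (hα0 : 0 ≤ α) (hα : α < 1 / 2)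
    (j k : ℕ) (hk : 1 ≤ k) (X F : ℝ) (hX : 0 ≤ X) (hF : 0 ≤ F)
    (h1 : M ^ ((j : ℝ) - 1) ≤
      (1 + X) ^ ((1 : ℝ) / 2 + α) * (1 + F + X) ^ ((1 : ℝ) / 2 - α))
    (h2 : (1 + X) ^ ((1 : ℝ) / 2 + α) * (1 + F + X) ^ ((1 : ℝ) / 2 - α) ≤ M ^ (j : ℝ))
    (h3 : M ^ ((j : ℝ) + (k : ℝ) - 1) ≤ F)
    (h4 : F ≤ M ^ ((j : ℝ) + (k : ℝ))) :
    M ^ (j : ℝ) * M ^ (-(k : ℝ) * (1 - 2 * α) / (1 + 2 * α)) *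
        M ^ (-(2 : ℝ) / (1 + 2 * α)) * (2 : ℝ) ^ (-(1 - 2 * α) / (1 + 2 * α)) ≤ 1 + X ∧
      1 + X ≤ M ^ (j : ℝ) * M ^ (-(k : ℝ) * (1 - 2 * α) / (1 + 2 * α)) *
        M ^ ((1 - 2 * α) / (1 + 2 * α)) := by
  have hM0 : (0:ℝ) < M := lt_of_lt_of_le one_pos hM
  set p : ℝ := 1/2 + α with hp_def
  set q : ℝ := 1/2 - α with hq_def
  have hp : 0 < p := by simp only [hp_def]; linarith
  have hq : 0 < q := by simp only [hq_def]; linarith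
  have hpq : p + q = 1 := by simp only [hp_def, hq_def]; ring
  have hd : (1:ℝ) + 2*α ≠ 0 := by positivity
  have hA0 : (0:ℝ) < 1 + X := by linarith
  have hB0 : (0:ℝ) < 1 + F + X := by linarith
  have hAB : 1 + X ≤ 1 + F + X := by linarith
  -- A ≤ M^j
  have hAMj : 1 + X ≤ M ^ (j:ℝ) := by
    calc 1 + X = (1+X)^(p+q) := by rw [hpq, Real.rpow_one]
      _ = (1+X)^p * (1+X)^q := Real.rpow_add hA0 _ _
      _ ≤ (1+X)^p * (1+F+X)^q := by gcongr
      _ ≤ M ^ (j:ℝ) := h2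
  -- upper bound on A^p
  have hupper : (1+X)^p ≤ M ^ ((j:ℝ)*p - (k:ℝ)*q + q) := by
    have hF' : M ^ ((j:ℝ)+(k:ℝ)-1) ≤ 1 + F + X := by linarith
    have h5 : (1+X)^p * M ^ (((j:ℝ)+(k:ℝ)-1)*q) ≤ M ^ (j:ℝ) := by
      rw [Real.rpow_mul hM0.le]
      refine le_trans ?_ h2
      gcongr
    rw [← le_div_iff₀ (by positivity)] at h5
    refine h5.trans (le_of_eq ?_)
    rw [← Real.rpow_sub hM0]
    congr 1
    linear_combination (j:ℝ) * hpq
  -- lower bound on A^p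
  have hlower : M ^ ((j:ℝ)*p - (k:ℝ)*q - 1) * 2 ^ (-q) ≤ (1+X)^p := by
    have h6 : M ^ (j:ℝ) ≤ M ^ ((j:ℝ)+(k:ℝ)) := by
      apply Real.rpow_le_rpow_of_exponent_le hM
      have : (1:ℝ) ≤ (k:ℝ) := by exact_mod_cast hk
      linarith
    have hBle : 1 + F + X ≤ 2 * M ^ ((j:ℝ)+(k:ℝ)) := by linarith
    have h7 : M ^ ((j:ℝ)-1) ≤ (1+X)^p * (2^q * M ^ (((j:ℝ)+(k:ℝ))*q)) := by
      refine le_trans h1 ?_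
      have he : (2^q * M ^ (((j:ℝ)+(k:ℝ))*q)) = (2 * M ^ ((j:ℝ)+(k:ℝ)))^q := by
        rw [Real.mul_rpow (by norm_num) (by positivity), ← Real.rpow_mul hM0.le]
      rw [he]
      gcongr
    rw [← div_le_iff₀ (by positivity)] at h7
    refine le_trans (le_of_eq ?_) h7
    rw [eq_div_iff (by positivity)]
    have h2q : (2:ℝ)^(-q) * 2^q = 1 := by
      rw [← Real.rpow_add two_pos]; simp
    calc M ^ ((j:ℝ)*p - (k:ℝ)*q - 1) * 2^(-q) * (2^q * M ^ (((j:ℝ)+(k:ℝ))*q))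
        = (M ^ ((j:ℝ)*p - (k:ℝ)*q - 1) * M ^ (((j:ℝ)+(k:ℝ))*q)) * ((2:ℝ)^(-q) * 2^q) := by
          ring
      _ = M ^ ((j:ℝ)-1) := by
          rw [h2q, mul_one, ← Real.rpow_add hM0]
          congr 1
          linear_combination (j:ℝ) * hpq
  constructor
  · -- lower bound
    have hL : M ^ (j : ℝ) * M ^ (-(k : ℝ) * (1 - 2 * α) / (1 + 2 * α)) *
        M ^ (-(2 : ℝ) / (1 + 2 * α)) * (2 : ℝ) ^ (-(1 - 2 * α) / (1 + 2 * α))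
        = M ^ (((j:ℝ)*p - (k:ℝ)*q - 1)/p) * 2 ^ ((-q)/p) := by
      rw [← Real.rpow_add hM0, ← Real.rpow_add hM0]
      congr 1
      · simp only [hp_def, hq_def]; field_simp; ring
      · simp only [hp_def, hq_def]; field_simp
    rw [hL]
    have := (Real.rpow_le_rpow_iff (x := M ^ (((j:ℝ)*p - (k:ℝ)*q - 1)/p) * 2 ^ ((-q)/p))
      (y := 1 + X) (by positivity) hA0.le hp).mp ?_
    · exact this
    · refine le_trans (le_of_eq ?_) hlower
      rw [Real.mul_rpow (by positivity) (by positivity),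
        ← Real.rpow_mul hM0.le, ← Real.rpow_mul (by norm_num : (0:ℝ) ≤ 2),
        div_mul_cancel₀ _ hp.ne', div_mul_cancel₀ _ hp.ne']
  · -- upper bound
    have hU : M ^ (j : ℝ) * M ^ (-(k : ℝ) * (1 - 2 * α) / (1 + 2 * α)) *
        M ^ ((1 - 2 * α) / (1 + 2 * α))
        = M ^ (((j:ℝ)*p - (k:ℝ)*q + q)/p) := by
      rw [← Real.rpow_add hM0, ← Real.rpow_add hM0]
      congr 1
      simp only [hp_def, hq_def]; field_simp; ring
    rw [hU]
    refine (Real.rpow_le_rpow_iff hA0.le (by positivity) hp).mp ?_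
    refine hupper.trans (le_of_eq ?_)
    rw [← Real.rpow_mul hM0.le, div_mul_cancel₀ _ hp.ne']
end
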